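/- With the setup of the previous statement, if additionally the families {h_k} and {P_ℓ} are each linearly independent (as functions), and H(conj(s), conj(p)) = conj(H(s,p)) for all s, p, then conj(x_{kℓ}) = x_{k,ρ(ℓ)} for all k, ℓ. -/
import Mathlib


open Complex

/-- Converse of the realness condition: if the `h_k` and the `P_ℓ` (restricted to the
conjugation-closed set `Pdom`) are linearly independent families and
`H(conj s, conj p) = conj (H(s,p))` for all `s ∈ ℂ`, `p ∈ Pdom`, then
`conj(x_{kℓ}) = x_{k,ρ(ℓ)}` for all `k, ℓ`. -/
theorem stmt9 {m r : ℕ} (x : Fin m → Fin r → ℂ) (h : Fin m → ℂ → ℂ)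
    (P : Fin r → ℂ → ℂ) (Pdom : Set ℂ) (hPdom : ∀ p ∈ Pdom, (starRingEnd ℂ) p ∈ Pdom)
    (hh : ∀ k s, h k ((starRingEnd ℂ) s) = (starRingEnd ℂ) (h k s))
    (ρ : Equiv.Perm (Fin r))
    (hP : ∀ ℓ, ∀ p ∈ Pdom, P ℓ ((starRingEnd ℂ) p) = (starRingEnd ℂ) (P (ρ ℓ) p))
    (hLIh : LinearIndependent ℂ h)
    (hLIP : LinearIndependent ℂ (fun ℓ : Fin r => fun p : Pdom => P ℓ (p : ℂ)))
    (hsym : ∀ (s : ℂ), ∀ p ∈ Pdom,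
      (∑ k, ∑ ℓ, x k ℓ * h k ((starRingEnd ℂ) s) * P ℓ ((starRingEnd ℂ) p)) =
        (starRingEnd ℂ) (∑ k, ∑ ℓ, x k ℓ * h k s * P ℓ p)) :
    ∀ k ℓ, (starRingEnd ℂ) (x k ℓ) = x k (ρ ℓ) := by
  set c : Fin m → Fin r → ℂ := fun k ℓ => (starRingEnd ℂ) (x k (ρ.symm ℓ)) - x k ℓ with hc
  have key : ∀ (s : ℂ), ∀ p ∈ Pdom,
      ∑ k, ∑ ℓ, c k ℓ * h k s * P ℓ p = 0 := by
    intro s p hp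
    have h1 := hsym s p hp
    have h2 : (∑ k, ∑ ℓ, x k ℓ * h k ((starRingEnd ℂ) s) * P ℓ ((starRingEnd ℂ) p))
        = (starRingEnd ℂ) (∑ k, ∑ ℓ, (starRingEnd ℂ) (x k ℓ) * h k s * P (ρ ℓ) p) := by
      rw [map_sum]
      refine Finset.sum_congr rfl fun k _ => ?_
      rw [map_sum]
      refine Finset.sum_congr rfl fun ℓ _ => ?_
      rw [hh, hP _ p hp, map_mul, map_mul, starRingEnd_self_apply]
    rw [h2] at h1
    have h3 := (starRingEnd ℂ).injective h1
    -- h3 : ∑ k ∑ ℓ conj(x k ℓ) * h k s * P (ρ ℓ) p = ∑ k ∑ ℓ x k ℓ * h k s * P ℓ p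
    have h4 : ∀ k : Fin m, ∑ ℓ, (starRingEnd ℂ) (x k ℓ) * h k s * P (ρ ℓ) p
        = ∑ ℓ, (starRingEnd ℂ) (x k (ρ.symm ℓ)) * h k s * P ℓ p := by
      intro k
      exact ((Equiv.sum_comp ρ (fun ℓ => (starRingEnd ℂ) (x k (ρ.symm ℓ)) * h k s * P ℓ p)).symm.trans
        (Finset.sum_congr rfl fun ℓ _ => by rw [Equiv.symm_apply_apply])).symm
    calc ∑ k, ∑ ℓ, c k ℓ * h k s * P ℓ p
        = (∑ k, ∑ ℓ, (starRingEnd ℂ) (x k (ρ.symm ℓ)) * h k s * P ℓ p)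
          - ∑ k, ∑ ℓ, x k ℓ * h k s * P ℓ p := by
          rw [← Finset.sum_sub_distrib]
          refine Finset.sum_congr rfl fun k _ => ?_
          rw [← Finset.sum_sub_distrib]
          refine Finset.sum_congr rfl fun ℓ _ => by ring
      _ = 0 := by
          rw [← h3]
          rw [sub_eq_zero]
          exact (Finset.sum_congr rfl fun k _ => (h4 k).symm)
  have step1 : ∀ k : Fin m, ∀ p : Pdom, ∑ ℓ, c k ℓ * P ℓ (p : ℂ) = 0 := by
    intro k p
    refine Fintype.linearIndependent_iff.mp hLIh (fun k => ∑ ℓ, c k ℓ * P ℓ (p : ℂ)) ?_ k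
    funext s
    simp only [Finset.sum_apply, Pi.smul_apply, smul_eq_mul, Pi.zero_apply]
    rw [← key s p p.2]
    refine Finset.sum_congr rfl fun k _ => ?_
    rw [Finset.sum_mul]
    exact Finset.sum_congr rfl fun ℓ _ => by ring
  have step2 : ∀ k ℓ, c k ℓ = 0 := by
    intro k ℓ
    refine Fintype.linearIndependent_iff.mp hLIP (c k) ?_ ℓ
    funext p
    simp only [Finset.sum_apply, Pi.smul_apply, smul_eq_mul, Pi.zero_apply]
    exact step1 k p
  intro k ℓ
  have := step2 k (ρ ℓ)
  rw [hc] at this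
  simp only [Equiv.symm_apply_apply, sub_eq_zero] at this
  exact this
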